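/- Let μ = (t_1, …, t_b) be a partition of r+1 with t_1 ≥ ⋯ ≥ t_b > 0, with transpose μ^⊤ = (r_1, …, r_a). Then there exists a unique w_μ ∈ [W(P_{μ^⊤})\W(G)] such that for every α ∈ Δ_μ, w_μ(α) is a negative root not belonging to Φ^−_{μ^⊤}; moreover, for every w ∈ [W(P_{μ^⊤})\W(G)] with w ≠ w_μ there exists α ∈ Δ_μ such that w(α) is a positive root. -/

import Mathlib

open Equiv Finset

/-- The simple reflection `s i = (i, i+1)` (1-based) in `S_{r+1}`, for `1 ≤ i ≤ r`;
the junk value `1` otherwise. -/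
def sr (r i : ℕ) : Equiv.Perm (Fin (r + 1)) :=
  if h : 1 ≤ i ∧ i ≤ r then Equiv.swap ⟨i - 1, by omega⟩ ⟨i, by omega⟩ else 1

/-- The cycle `π_k` with ambient index `i`, i.e. `s_i s_{i-1} ⋯ s_k`
(the identity when `k = i + 1`). -/
def cyc (r i k : ℕ) : Equiv.Perm (Fin (r + 1)) :=
  ((List.range (i + 1 - k)).map fun t => sr r (i - t)).prod

/-- The product `π_{k i} π_{k (i+1)} ⋯ π_{k j}`, the factor `π_{k t}` being the
cycle with ambient index `t`. -/
def cycProd (r : ℕ) (k : ℕ → ℕ) (i j : ℕ) : Equiv.Perm (Fin (r + 1)) :=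
  ((List.range' i (j + 1 - i)).map fun t => cyc r t (k t)).prod

/-- Coxeter length of a permutation: the number of inversions. -/
def lenInv {n : ℕ} (w : Equiv.Perm (Fin n)) : ℕ :=
  (Finset.univ.filter fun p : Fin n × Fin n => p.1 < p.2 ∧ w p.2 < w p.1).card

/-- Partial sums of a (1-based) composition: `psum c j = c 1 + ⋯ + c j`. -/
def psum (c : ℕ → ℕ) (j : ℕ) : ℕ := ∑ i ∈ Finset.Icc 1 j, c i

/-- The transpose partition of `(t 1, …, t b)`: `transp b t j = #{i ∈ [1,b] : t i ≥ j}`. -/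
def transp (b : ℕ) (t : ℕ → ℕ) (j : ℕ) : ℕ :=
  ((Finset.Icc 1 b).filter fun i => j ≤ t i).card

/-- The element of `Fin (r+1)` with value `i` (for `i ≤ r`). -/
def finOf (r i : ℕ) : Fin (r + 1) := ⟨min i r, by omega⟩

/-- `w(α_i)` is a positive root, where `α_i = e_i − e_{i+1}` (1-based), i.e. the
0-based pair `(i-1, i)`; `w(e_c − e_d) = e_{w c} − e_{w d}` is positive iff `w c < w d`. -/
def posRoot (r : ℕ) (w : Equiv.Perm (Fin (r + 1))) (i : ℕ) : Prop :=
  (w (finOf r (i - 1)) : ℕ) < w (finOf r i)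

/-- `w(α_i)` is a negative root. -/
def negRoot (r : ℕ) (w : Equiv.Perm (Fin (r + 1))) (i : ℕ) : Prop :=
  (w (finOf r i) : ℕ) < w (finOf r (i - 1))

/-- `w(α_i)` is a simple root. -/
def simpleRoot (r : ℕ) (w : Equiv.Perm (Fin (r + 1))) (i : ℕ) : Prop :=
  (w (finOf r i) : ℕ) = (w (finOf r (i - 1)) : ℕ) + 1

/-- `w(α_i) = α_j` (as roots: the image pair is `(j-1, j)` in 0-based indices). -/
def eqRoot (r : ℕ) (w : Equiv.Perm (Fin (r + 1))) (i j : ℕ) : Prop :=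
  (w (finOf r (i - 1)) : ℕ) = j - 1 ∧ (w (finOf r i) : ℕ) = j

/-- `Π_l Π_{l+1} ⋯ Π_a` for the composition `c` and tuple `k`, where
`Π_j = π_{k_{x_{j-1}}} ⋯ π_{k_{x_j - 1}}` and `x_j = psum c j`. -/
def tailProd (r a : ℕ) (c k : ℕ → ℕ) (l : ℕ) : Equiv.Perm (Fin (r + 1)) :=
  ((List.range' l (a + 1 - l)).map fun j => cycProd r k (psum c (j - 1)) (psum c j - 1)).prod

/-- The subgroup `W(P)`: generated by the simple reflections `s i` with `i ∈ [1,r]`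
avoiding the partial sums `x 1, …, x (a-1)` of the composition `c`. -/
def WP (r a : ℕ) (c : ℕ → ℕ) : Subgroup (Equiv.Perm (Fin (r + 1))) :=
  Subgroup.closure
    {g | ∃ i, 1 ≤ i ∧ i ≤ r ∧ (∀ j, 1 ≤ j → j ≤ a - 1 → i ≠ psum c j) ∧ g = sr r i}

/-- `α_i ∈ Δ_λ` for the composition `λ = (p 1, …, p m)` of `r+1`. -/
def inDelta (r m : ℕ) (p : ℕ → ℕ) (i : ℕ) : Prop :=
  1 ≤ i ∧ i ≤ r ∧ ∀ j, 1 ≤ j → j ≤ m - 1 → i ≠ psum p j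

/-- The left coset `H · g`. -/
def cosetOf {G : Type*} [Group G] (H : Subgroup G) (g : G) : Set G :=
  {x | ∃ h ∈ H, x = h * g}

/-- The (0-based) positions `u` and `v` lie in the same block of the composition
`μ^⊤ = transp b t`; a negative root `e_c − e_d` lies in `Φ⁻_{μ^⊤}` iff its two
indices lie in the same block. -/
def sameBlock (b : ℕ) (t : ℕ → ℕ) (u v : ℕ) : Prop :=
  ∃ j, 1 ≤ j ∧ j ≤ t 1 ∧
    psum (transp b t) (j - 1) ≤ u ∧ u < psum (transp b t) j ∧
    psum (transp b t) (j - 1) ≤ v ∧ v < psum (transp b t) j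

namespace S17

lemma psum_zero (c : ℕ → ℕ) : psum c 0 = 0 := by simp [psum]

lemma psum_succ (c : ℕ → ℕ) (j : ℕ) : psum c (j + 1) = psum c j + c (j + 1) := by
  rw [psum, psum, Finset.sum_Icc_succ_top (by omega)]

lemma psum_mono (c : ℕ → ℕ) {j j' : ℕ} (h : j ≤ j') : psum c j ≤ psum c j' :=
  Finset.sum_le_sum_of_subset (Finset.Icc_subset_Icc_right h)

/-- block index: `idx c m q = j` iff `psum c (j-1) ≤ q < psum c j` (1-based). -/
def idx (c : ℕ → ℕ) (m q : ℕ) : ℕ :=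
  1 + ((Finset.Icc 1 m).filter fun i => psum c i ≤ q).card

lemma one_le_idx (c : ℕ → ℕ) (m q : ℕ) : 1 ≤ idx c m q := Nat.le_add_right 1 _

lemma idx_le_of_lt {c : ℕ → ℕ} {m q j : ℕ} (h : q < psum c j) : idx c m q ≤ j := by
  rcases Nat.eq_zero_or_pos j with rfl | hj
  · simp [psum] at h
  have hsub : ((Finset.Icc 1 m).filter fun i => psum c i ≤ q) ⊆ Finset.Icc 1 (j - 1) := by
    intro i hi
    simp only [Finset.mem_filter, Finset.mem_Icc] at hi ⊢
    refine ⟨hi.1.1, ?_⟩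
    by_contra hij
    exact absurd (le_trans (psum_mono c (by omega : j ≤ i)) hi.2) (by omega)
  have := Finset.card_le_card hsub
  rw [Nat.card_Icc] at this
  unfold idx; omega

lemma lt_idx_of_le {c : ℕ → ℕ} {m q j : ℕ} (hj : j ≤ m) (h : psum c j ≤ q) :
    j < idx c m q := by
  have hsub : Finset.Icc 1 j ⊆ (Finset.Icc 1 m).filter fun i => psum c i ≤ q := by
    intro i hi
    simp only [Finset.mem_filter, Finset.mem_Icc] at hi ⊢
    exact ⟨⟨hi.1, le_trans hi.2 hj⟩, le_trans (psum_mono c hi.2) h⟩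
  have := Finset.card_le_card hsub
  rw [Nat.card_Icc] at this
  unfold idx; omega

lemma idx_le {c : ℕ → ℕ} {m q : ℕ} (hq : q < psum c m) : idx c m q ≤ m :=
  idx_le_of_lt hq

lemma psum_idx_le {c : ℕ → ℕ} (m q : ℕ) : psum c (idx c m q - 1) ≤ q := by
  by_contra h
  push_neg at h
  have := idx_le_of_lt (m := m) h
  have := one_le_idx c m q
  omega

lemma lt_psum_idx {c : ℕ → ℕ} {m q : ℕ} (hq : q < psum c m) : q < psum c (idx c m q) := by
  by_contra h
  push_neg at h
  exact absurd (lt_idx_of_le (idx_le hq) h) (lt_irrefl _)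

lemma idx_mono (c : ℕ → ℕ) (m : ℕ) {q q' : ℕ} (h : q ≤ q') : idx c m q ≤ idx c m q' := by
  have hsub : ((Finset.Icc 1 m).filter fun i => psum c i ≤ q) ⊆
      (Finset.Icc 1 m).filter fun i => psum c i ≤ q' := by
    intro i hi
    simp only [Finset.mem_filter] at hi ⊢
    exact ⟨hi.1, le_trans hi.2 h⟩
  have := Finset.card_le_card hsub
  unfold idx; omega

lemma idx_eq {c : ℕ → ℕ} {m q j : ℕ} (h1 : 1 ≤ j) (hj : j ≤ m)
    (h2 : psum c (j - 1) ≤ q) (h3 : q < psum c j) : idx c m q = j := by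
  have ha := idx_le_of_lt (m := m) h3
  have hbj := lt_idx_of_le (c := c) (q := q) (by omega : j - 1 ≤ m) h2
  omega

lemma transp_pos {b : ℕ} {t : ℕ → ℕ} {j : ℕ} (hb : 1 ≤ b) (h1 : 1 ≤ j) (h2 : j ≤ t 1) :
    1 ≤ transp b t j := by
  have : (1 : ℕ) ∈ (Finset.Icc 1 b).filter fun i => j ≤ t i := by
    simp only [Finset.mem_filter, Finset.mem_Icc]
    exact ⟨⟨le_refl 1, hb⟩, h2⟩
  have hpos := Finset.card_pos.2 ⟨1, this⟩
  unfold transp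
  omega

lemma transp_ge {b : ℕ} {t : ℕ → ℕ} (htmono : ∀ i j, 1 ≤ i → i ≤ j → j ≤ b → t j ≤ t i)
    {i j : ℕ} (h1 : 1 ≤ i) (h2 : i ≤ b) (h4 : j ≤ t i) : i ≤ transp b t j := by
  have hsub : Finset.Icc 1 i ⊆ (Finset.Icc 1 b).filter fun i' => j ≤ t i' := by
    intro i' hi'
    simp only [Finset.mem_filter, Finset.mem_Icc] at hi' ⊢
    exact ⟨⟨hi'.1, le_trans hi'.2 h2⟩, le_trans h4 (htmono i' i hi'.1 hi'.2 h2)⟩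
  have := Finset.card_le_card hsub
  rw [Nat.card_Icc] at this
  unfold transp; omega

/-- double counting: total size of the transpose equals total size. -/
lemma psum_transp (b : ℕ) (t : ℕ → ℕ) (hb : 1 ≤ b)
    (htmono : ∀ i j, 1 ≤ i → i ≤ j → j ≤ b → t j ≤ t i) :
    psum (transp b t) (t 1) = psum t b := by
  unfold psum transp
  rw [Finset.sum_congr rfl fun j _ => Finset.card_filter _ _]
  rw [Finset.sum_comm]
  refine Finset.sum_congr rfl fun i hi => ?_
  rw [← Finset.card_filter]
  have : (Finset.Icc 1 (t 1)).filter (fun j => j ≤ t i) = Finset.Icc 1 (t i) := by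
    have hti : t i ≤ t 1 := by
      simp only [Finset.mem_Icc] at hi
      exact htmono 1 i le_rfl hi.1 hi.2
    ext j
    simp only [Finset.mem_filter, Finset.mem_Icc]
    omega
  rw [this, Nat.card_Icc]
  omega


/-- bundled hypotheses of the theorem. -/
def Hyp (r b : ℕ) (t : ℕ → ℕ) : Prop :=
  1 ≤ r ∧ 1 ≤ b ∧ (∀ i, 1 ≤ i → i ≤ b → 1 ≤ t i) ∧
    (∀ i j, 1 ≤ i → i ≤ j → j ≤ b → t j ≤ t i) ∧ psum t b = r + 1

/-- 1-based row of (0-based) position `q` in the diagram of `μ = (t 1, …, t b)`. -/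
def rowOf (b : ℕ) (t : ℕ → ℕ) (q : ℕ) : ℕ := idx t b q

/-- 0-based column of position `q`. -/
def colOf (b : ℕ) (t : ℕ → ℕ) (q : ℕ) : ℕ := q - psum t (rowOf b t q - 1)

/-- target block of position `q`: `t i - c` where `(i, c)` is the cell of `q`. -/
def Bv (b : ℕ) (t : ℕ → ℕ) (q : ℕ) : ℕ := t (rowOf b t q) - colOf b t q

/-- value of `w_μ` at position `q`. -/
def fval (b : ℕ) (t : ℕ → ℕ) (q : ℕ) : ℕ :=
  psum (transp b t) (Bv b t q - 1) + (rowOf b t q - 1)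

/-- block of a value `v` w.r.t. the transpose composition. -/
def blk (b : ℕ) (t : ℕ → ℕ) (v : ℕ) : ℕ := idx (transp b t) (t 1) v

lemma cell {r b : ℕ} {t : ℕ → ℕ} (H : Hyp r b t) {q : ℕ} (hq : q ≤ r) :
    1 ≤ rowOf b t q ∧ rowOf b t q ≤ b ∧
    psum t (rowOf b t q - 1) ≤ q ∧ q < psum t (rowOf b t q) ∧
    colOf b t q < t (rowOf b t q) ∧
    1 ≤ Bv b t q ∧ Bv b t q ≤ t (rowOf b t q) ∧ Bv b t q ≤ t 1 := by
  obtain ⟨hr, hb, htpos, htmono, htsum⟩ := H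
  have hq' : q < psum t b := by omega
  have h1 : 1 ≤ rowOf b t q := one_le_idx t b q
  have h2 : rowOf b t q ≤ b := idx_le hq'
  have h3 : psum t (rowOf b t q - 1) ≤ q := psum_idx_le b q
  have h4 : q < psum t (rowOf b t q) := lt_psum_idx hq'
  have h5 : colOf b t q < t (rowOf b t q) := by
    have hrw : rowOf b t q = (rowOf b t q - 1) + 1 := by omega
    have := psum_succ t (rowOf b t q - 1)
    rw [← hrw] at this
    unfold colOf
    omega
  have hmono : t (rowOf b t q) ≤ t 1 := htmono 1 _ le_rfl h1 h2
  refine ⟨h1, h2, h3, h4, h5, ?_, ?_, ?_⟩ <;> unfold Bv <;> omega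

lemma fval_block {r b : ℕ} {t : ℕ → ℕ} (H : Hyp r b t) {q : ℕ} (hq : q ≤ r) :
    psum (transp b t) (Bv b t q - 1) ≤ fval b t q ∧
    fval b t q < psum (transp b t) (Bv b t q) ∧
    fval b t q ≤ r ∧
    blk b t (fval b t q) = Bv b t q := by
  obtain ⟨h1, h2, h3, h4, h5, h6, h7, h8⟩ := cell H hq
  obtain ⟨hr, hb, htpos, htmono, htsum⟩ := H
  have hge : rowOf b t q ≤ transp b t (Bv b t q) := transp_ge htmono h1 h2 h7
  have hstep : psum (transp b t) (Bv b t q) =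
      psum (transp b t) (Bv b t q - 1) + transp b t (Bv b t q) := by
    have hbv : Bv b t q = (Bv b t q - 1) + 1 := by omega
    have := psum_succ (transp b t) (Bv b t q - 1)
    rw [← hbv] at this
    exact this
  have hlt : fval b t q < psum (transp b t) (Bv b t q) := by
    unfold fval; omega
  have htop : psum (transp b t) (t 1) = r + 1 := by
    rw [psum_transp b t hb htmono]; exact htsum
  have hler : fval b t q ≤ r := by
    have := psum_mono (transp b t) h8
    omega
  refine ⟨Nat.le_add_right _ _, hlt, hler, ?_⟩
  exact idx_eq h6 h8 (Nat.le_add_right _ _) hlt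

lemma fval_inj {r b : ℕ} {t : ℕ → ℕ} (H : Hyp r b t) {q q' : ℕ} (hq : q ≤ r) (hq' : q' ≤ r)
    (h : fval b t q = fval b t q') : q = q' := by
  obtain ⟨a1, a2, a3, a4, a5, a6, a7, a8⟩ := cell H hq
  obtain ⟨b1, b2, b3, b4, b5, b6, b7, b8⟩ := cell H hq'
  have hB : Bv b t q = Bv b t q' := by
    rw [← (fval_block H hq).2.2.2, ← (fval_block H hq').2.2.2, h]
  have hrow : rowOf b t q = rowOf b t q' := by
    unfold fval at h
    rw [hB] at h
    omega
  rw [← hrow] at b3 b5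
  unfold Bv colOf at hB
  rw [← hrow] at hB
  unfold colOf at a5
  omega

lemma blk_mono {b : ℕ} (t : ℕ → ℕ) {v v' : ℕ} (h : v ≤ v') : blk b t v ≤ blk b t v' :=
  idx_mono _ _ h

lemma blk_bounds {r b : ℕ} {t : ℕ → ℕ} (H : Hyp r b t) {v : ℕ} (hv : v ≤ r) :
    1 ≤ blk b t v ∧ blk b t v ≤ t 1 ∧
    psum (transp b t) (blk b t v - 1) ≤ v ∧ v < psum (transp b t) (blk b t v) := by
  obtain ⟨hr, hb, htpos, htmono, htsum⟩ := H
  have htop : psum (transp b t) (t 1) = r + 1 := by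
    rw [psum_transp b t hb htmono]; exact htsum
  have hv' : v < psum (transp b t) (t 1) := by omega
  exact ⟨one_le_idx _ _ _, idx_le hv', psum_idx_le _ _, lt_psum_idx hv'⟩

lemma lt_of_blk_lt {r b : ℕ} {t : ℕ → ℕ} (H : Hyp r b t) {v v' : ℕ} (hv : v ≤ r)
    (hv' : v' ≤ r) (h : blk b t v < blk b t v') : v < v' := by
  have b1 := (blk_bounds H hv).2.2.2
  have b2 := (blk_bounds H hv').2.2.1
  have := psum_mono (transp b t) (by omega : blk b t v ≤ blk b t v' - 1)
  omega

/-- the underlying function of `w_μ`. -/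
def Fm (r b : ℕ) (t : ℕ → ℕ) : Fin (r + 1) → Fin (r + 1) :=
  fun q => ⟨min (fval b t q.val) r, by omega⟩

/-- the permutation `w_μ`. -/
noncomputable def w0 (r b : ℕ) (t : ℕ → ℕ) : Equiv.Perm (Fin (r + 1)) :=
  if h : Function.Bijective (Fm r b t) then Equiv.ofBijective _ h else 1

lemma w0_apply {r b : ℕ} {t : ℕ → ℕ} (H : Hyp r b t) (q : Fin (r + 1)) :
    ((w0 r b t) q : ℕ) = fval b t q.val := by
  have hval : ∀ p : Fin (r + 1), ((Fm r b t) p : ℕ) = fval b t p.val := by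
    intro p
    have := (fval_block H (by omega : p.val ≤ r)).2.2.1
    simp only [Fm]
    omega
  have hinj : Function.Injective (Fm r b t) := by
    intro p p' hpp
    have := congrArg Fin.val hpp
    rw [hval, hval] at this
    exact Fin.ext (fval_inj H (by omega) (by omega) this)
  have hbij := Finite.injective_iff_bijective.mp hinj
  rw [w0, dif_pos hbij]
  exact hval q


/-- within each block of values, positions occur in increasing order. -/
def Pprop (r b : ℕ) (t : ℕ → ℕ) (σ : Equiv.Perm (Fin (r + 1))) : Prop :=
  ∀ p q : Fin (r + 1), p < q → blk b t (σ p).val = blk b t (σ q).val → ((σ p : ℕ) < (σ q : ℕ))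

lemma Pprop_w0 {r b : ℕ} {t : ℕ → ℕ} (H : Hyp r b t) : Pprop r b t (w0 r b t) := by
  intro p q hpq hblk
  have hp : p.val ≤ r := by omega
  have hq : q.val ≤ r := by omega
  rw [w0_apply H p, w0_apply H q] at hblk ⊢
  have hB : Bv b t p.val = Bv b t q.val := by
    rw [← (fval_block H hp).2.2.2, ← (fval_block H hq).2.2.2, hblk]
  have hpq' : p.val < q.val := hpq
  have hm : rowOf b t p.val ≤ rowOf b t q.val := idx_mono t b (le_of_lt hpq')
  obtain ⟨a1, a2, a3, a4, a5, a6, a7, a8⟩ := cell H hp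
  obtain ⟨b1, b2, b3, b4, b5, b6, b7, b8⟩ := cell H hq
  have hrow : rowOf b t p.val < rowOf b t q.val := by
    rcases Nat.lt_or_ge (rowOf b t p.val) (rowOf b t q.val) with h | h
    · exact h
    · exfalso
      have hre : rowOf b t p.val = rowOf b t q.val := by omega
      unfold Bv colOf at hB
      unfold colOf at b5
      rw [hre] at hB a3
      omega
  unfold fval
  rw [hB]
  omega

lemma swap_val_lt {n : ℕ} {a c : Fin n} (h : (a : ℕ) + 1 = (c : ℕ)) {z z' : Fin n}
    (hlt : z < z') (hne : ¬(z = a ∧ z' = c)) :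
    Equiv.swap a c z < Equiv.swap a c z' := by
  have hlt' : (z : ℕ) < (z' : ℕ) := hlt
  have hne' : ¬((z : ℕ) = a ∧ (z' : ℕ) = c) := fun ⟨u, v⟩ => hne ⟨Fin.ext u, Fin.ext v⟩
  rw [Equiv.swap_apply_def, Equiv.swap_apply_def, Fin.lt_def]
  split_ifs with h1 h2 h3 h4 h5 <;> simp_all [Fin.ext_iff] <;> omega

lemma lenInv_mul_swap_lt {n : ℕ} (w : Equiv.Perm (Fin n)) (a c : Fin n)
    (h : (a : ℕ) + 1 = (c : ℕ)) {p q : Fin n} (hpq : p < q) (hp : w p = c) (hq : w q = a) :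
    lenInv (Equiv.swap a c * w) < lenInv w := by
  have hac : a < c := by rw [Fin.lt_def]; omega
  apply Finset.card_lt_card
  have hsub : (Finset.univ.filter fun pr : Fin n × Fin n =>
      pr.1 < pr.2 ∧ (Equiv.swap a c * w) pr.2 < (Equiv.swap a c * w) pr.1) ⊆
      Finset.univ.filter fun pr : Fin n × Fin n => pr.1 < pr.2 ∧ w pr.2 < w pr.1 := by
    intro ⟨u, v⟩ hmem
    simp only [Finset.mem_filter, Finset.mem_univ, true_and] at hmem ⊢
    simp only [Equiv.Perm.mul_apply] at hmem ⊢
    obtain ⟨huv, hsw⟩ := hmem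
    refine ⟨huv, ?_⟩
    by_contra hnot
    have hne : w u ≠ w v := fun e => absurd (w.injective e) (ne_of_lt huv)
    have hwlt : w u < w v := by
      rcases lt_or_ge (w u) (w v) with h' | h'
      · exact h'
      · exact absurd (lt_of_le_of_ne h' hne.symm) hnot
    by_cases hcase : w u = a ∧ w v = c
    · have hu : u = q := w.injective (by rw [hcase.1, hq])
      have hv : v = p := w.injective (by rw [hcase.2, hp])
      rw [hu, hv] at huv
      exact absurd hpq (asymm huv)
    · exact absurd (swap_val_lt h hwlt hcase) (asymm hsw)
  refine (Finset.ssubset_iff_of_subset hsub).2 ⟨(p, q), ?_, ?_⟩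
  · simp only [Finset.mem_filter, Finset.mem_univ, true_and]
    exact ⟨hpq, by rw [hp, hq]; exact hac⟩
  · simp only [Finset.mem_filter, Finset.mem_univ, true_and]
    simp only [Equiv.Perm.mul_apply, not_and]
    intro _
    rw [hp, hq, Equiv.swap_apply_left, Equiv.swap_apply_right]
    exact asymm hac

lemma exists_descent {n : ℕ} (w : Equiv.Perm (Fin n)) (p q : Fin n) (hpq : p < q)
    (hlt : (w q : ℕ) < (w p : ℕ)) :
    ∃ z z' : Fin n, (z' : ℕ) = (z : ℕ) + 1 ∧ (w q : ℕ) ≤ (z : ℕ) ∧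
      (z' : ℕ) ≤ (w p : ℕ) ∧ w.symm z' < w.symm z := by
  by_contra hall
  push_neg at hall
  have hn : (w p : ℕ) < n := (w p).isLt
  have hstep : ∀ m (h0 : (w q : ℕ) ≤ m) (h1 : m + 1 ≤ (w p : ℕ)),
      (w.symm ⟨m, by omega⟩ : Fin n) < w.symm ⟨m + 1, by omega⟩ := by
    intro m h0 h1
    have hnlt := hall ⟨m, by omega⟩ ⟨m + 1, by omega⟩ rfl h0 h1
    have hne2 : (w.symm ⟨m, by omega⟩ : Fin n) ≠ w.symm ⟨m + 1, by omega⟩ := by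
      intro e
      have := w.symm.injective e
      simp [Fin.ext_iff] at this
    exact lt_of_le_of_ne hnlt hne2
  have haux : ∀ d (hd : (w q : ℕ) + d ≤ (w p : ℕ)),
      (q : Fin n) ≤ w.symm ⟨(w q : ℕ) + d, by omega⟩ := by
    intro d
    induction d with
    | zero =>
      intro hd
      have e1 : (⟨(w q : ℕ) + 0, by omega⟩ : Fin n) = w q := by apply Fin.ext; simp
      rw [e1, Equiv.symm_apply_apply]
    | succ d ih =>
      intro hd
      have h1 := ih (by omega)
      have h2 := hstep ((w q : ℕ) + d) (by omega) (by omega)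
      have e2 : (⟨(w q : ℕ) + (d + 1), by omega⟩ : Fin n) = ⟨(w q : ℕ) + d + 1, by omega⟩ := by
        apply Fin.ext; simp; omega
      rw [e2]
      exact le_of_lt (lt_of_le_of_lt h1 h2)
  have hfin := haux ((w p : ℕ) - (w q : ℕ)) (by omega)
  have e3 : (⟨(w q : ℕ) + ((w p : ℕ) - (w q : ℕ)), by omega⟩ : Fin n) = w p := by
    apply Fin.ext; simp; omega
  rw [e3, Equiv.symm_apply_apply] at hfin
  exact absurd hpq (not_lt.2 hfin)

lemma min_rep_P {r b : ℕ} {t : ℕ → ℕ} (H : Hyp r b t) (w : Equiv.Perm (Fin (r + 1)))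
    (hmin : ∀ u ∈ WP r (t 1) (transp b t), lenInv w ≤ lenInv (u * w)) :
    Pprop r b t w := by
  intro p q hpq hblk
  by_contra hnot
  have hnep : p ≠ q := ne_of_lt hpq
  have hne : (w p : ℕ) ≠ (w q : ℕ) :=
    fun e => hnep (w.injective (Fin.ext e))
  have hlt : (w q : ℕ) < (w p : ℕ) := by
    have : ¬((w p : ℕ) < (w q : ℕ)) := hnot
    omega
  have hwp : (w p : ℕ) ≤ r := by omega
  -- find an adjacent descent m, m+1 within the value interval
  have hex := exists_descent w p q hpq hlt
  obtain ⟨z, z', hz1, hm0, hm1, hdesc⟩ := hex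
  -- z and z' are in the same block
  have hblk' : blk b t (w q : ℕ) = blk b t (w p : ℕ) := hblk.symm
  have hc1 : blk b t (w q : ℕ) ≤ blk b t (z : ℕ) := blk_mono t hm0
  have hc2 : blk b t (z : ℕ) ≤ blk b t ((z : ℕ) + 1) := blk_mono t (by omega)
  have hc3 : blk b t ((z : ℕ) + 1) ≤ blk b t (w p : ℕ) := blk_mono t (by omega)
  have hmm : blk b t (z : ℕ) = blk b t ((z : ℕ) + 1) := by omega
  -- z+1 is not a boundary
  have hnb : ∀ j, 1 ≤ j → j ≤ t 1 - 1 → (z : ℕ) + 1 ≠ psum (transp b t) j := by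
    intro j hj1 hj2 heq
    have hx1 : blk b t (z : ℕ) ≤ j := idx_le_of_lt (by omega)
    have hx2 : j < blk b t ((z : ℕ) + 1) := lt_idx_of_le (by omega) (by omega)
    omega
  have hzr : (z : ℕ) + 1 ≤ r := by omega
  have hmem : sr r ((z : ℕ) + 1) ∈ WP r (t 1) (transp b t) :=
    Subgroup.subset_closure ⟨(z : ℕ) + 1, by omega, hzr, hnb, rfl⟩
  have hcond : 1 ≤ (z : ℕ) + 1 ∧ (z : ℕ) + 1 ≤ r := ⟨by omega, hzr⟩
  have hsr : sr r ((z : ℕ) + 1) = Equiv.swap z z' := by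
    have e1 : (⟨(z : ℕ) + 1 - 1, by omega⟩ : Fin (r + 1)) = z := by apply Fin.ext; simp
    have e2 : (⟨(z : ℕ) + 1, by omega⟩ : Fin (r + 1)) = z' := by apply Fin.ext; simp; omega
    rw [sr, dif_pos hcond, e1, e2]
  have hlen := lenInv_mul_swap_lt w z z' hz1.symm hdesc
    (Equiv.apply_symm_apply _ _) (Equiv.apply_symm_apply _ _)
  have := hmin _ hmem
  rw [hsr] at this
  omega

lemma WP_blk {r b : ℕ} {t : ℕ → ℕ} (H : Hyp r b t) {u : Equiv.Perm (Fin (r + 1))}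
    (hu : u ∈ WP r (t 1) (transp b t)) :
    ∀ v : Fin (r + 1), blk b t (u v).val = blk b t v.val := by
  induction hu using Subgroup.closure_induction with
  | mem x hx =>
    obtain ⟨i, hi1, hir, hnb, rfl⟩ := hx
    have hcond : 1 ≤ i ∧ i ≤ r := ⟨hi1, hir⟩
    have hsr : sr r i = Equiv.swap (⟨i - 1, by omega⟩ : Fin (r + 1)) ⟨i, by omega⟩ := by
      rw [sr, dif_pos hcond]
    have hblkeq : blk b t (i - 1) = blk b t i := by
      by_contra hne
      have hmono : blk b t (i - 1) ≤ blk b t i := blk_mono t (by omega)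
      obtain ⟨d1, d2, d3, d4⟩ := blk_bounds H (show i ≤ r from hir)
      obtain ⟨e1, e2, e3, e4⟩ := blk_bounds H (show i - 1 ≤ r by omega)
      have hp : psum (transp b t) (blk b t (i - 1)) ≤ psum (transp b t) (blk b t i - 1) :=
        psum_mono _ (by omega)
      have heq : psum (transp b t) (blk b t i - 1) = i := by omega
      exact hnb (blk b t i - 1) (by omega) (by omega) heq.symm
    intro v
    rw [hsr]
    by_cases hv1 : v = ⟨i - 1, by omega⟩
    · rw [hv1, Equiv.swap_apply_left]
      exact hblkeq.symm
    · by_cases hv2 : v = ⟨i, by omega⟩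
      · rw [hv2, Equiv.swap_apply_right]
        exact hblkeq
      · rw [Equiv.swap_apply_of_ne_of_ne hv1 hv2]
  | one => intro v; rfl
  | mul x y hx hy ihx ihy =>
    intro v
    rw [Equiv.Perm.mul_apply, ihx (y v), ihy v]
  | inv x hx ihx =>
    intro v
    have := ihx (x⁻¹ v)
    rw [show x (x⁻¹ v) = v from by simp] at this
    exact this.symm

lemma partA {r b : ℕ} {t : ℕ → ℕ} (H : Hyp r b t) {w : Equiv.Perm (Fin (r + 1))}
    (hP : Pprop r b t w) {u : Equiv.Perm (Fin (r + 1))}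
    (hu : u ∈ WP r (t 1) (transp b t)) : lenInv w ≤ lenInv (u * w) := by
  apply Finset.card_le_card
  intro ⟨p, q⟩ hmem
  simp only [Finset.mem_filter, Finset.mem_univ, true_and] at hmem ⊢
  simp only [Equiv.Perm.mul_apply] at hmem ⊢
  obtain ⟨hpq, hinv⟩ := hmem
  refine ⟨hpq, ?_⟩
  have hmono : blk b t (w q).val ≤ blk b t (w p).val := blk_mono t (le_of_lt hinv)
  have hblt : blk b t (w q).val < blk b t (w p).val := by
    rcases Nat.lt_or_ge (blk b t (w q).val) (blk b t (w p).val) with h' | h'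
    · exact h'
    · exact absurd (hP p q hpq (by omega)) (by exact_mod_cast asymm hinv)
  have h1 : blk b t (u (w q)).val < blk b t (u (w p)).val := by
    rw [WP_blk H hu (w q), WP_blk H hu (w p)]
    exact hblt
  have := lt_of_blk_lt H (show (u (w q)).val ≤ r by omega) (show (u (w p)).val ≤ r by omega) h1
  exact this

lemma finOf_val {r k : ℕ} (hk : k ≤ r) : ((finOf r k) : ℕ) = k := by
  simp [finOf]; omega

lemma delta_row {r b : ℕ} {t : ℕ → ℕ} (H : Hyp r b t) {i : ℕ} (hΔ : inDelta r b t i) :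
    rowOf b t (i - 1) = rowOf b t i ∧ colOf b t i = colOf b t (i - 1) + 1 := by
  obtain ⟨hi1, hir, hnb⟩ := hΔ
  obtain ⟨a1, a2, a3, a4, a5, a6, a7, a8⟩ := cell H hir
  have hne : psum t (rowOf b t i - 1) ≠ i := by
    intro heq
    rcases Nat.eq_or_lt_of_le a1 with h1 | h1
    · rw [← h1] at heq
      rw [psum_zero] at heq
      omega
    · exact hnb (rowOf b t i - 1) (by omega) (by omega) heq.symm
  have hle : psum t (rowOf b t i - 1) ≤ i - 1 := by omega
  have hrow : rowOf b t (i - 1) = rowOf b t i := idx_eq a1 a2 hle (by omega)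
  refine ⟨hrow, ?_⟩
  unfold colOf
  rw [hrow]
  omega

lemma partB {r b : ℕ} {t : ℕ → ℕ} (H : Hyp r b t) {i : ℕ} (hΔ : inDelta r b t i) :
    fval b t i < fval b t (i - 1) ∧
      ¬ sameBlock b t (fval b t (i - 1)) (fval b t i) := by
  obtain ⟨hrow, hcol⟩ := delta_row H hΔ
  obtain ⟨hi1, hir, hnb⟩ := hΔ
  obtain ⟨a1, a2, a3, a4, a5, a6, a7, a8⟩ := cell H hir
  obtain ⟨b1, b2, b3, b4, b5, b6, b7, b8⟩ := cell H (show i - 1 ≤ r by omega)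
  have hBv : Bv b t (i - 1) = Bv b t i + 1 := by
    unfold Bv
    rw [hrow]
    omega
  obtain ⟨f1, f2, f3, f4⟩ := fval_block H hir
  obtain ⟨g1, g2, g3, g4⟩ := fval_block H (show i - 1 ≤ r by omega)
  have hpos : 1 ≤ transp b t (Bv b t i) := transp_pos H.2.1 a6 a8
  have hstep : psum (transp b t) (Bv b t i) =
      psum (transp b t) (Bv b t i - 1) + transp b t (Bv b t i) := by
    have e := psum_succ (transp b t) (Bv b t i - 1)
    rw [show Bv b t i - 1 + 1 = Bv b t i from by omega] at e
    exact e
  have hBg : psum (transp b t) (Bv b t i) ≤ fval b t (i - 1) := by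
    have := g1
    rw [hBv] at this
    simpa using this
  constructor
  · -- negRoot: fval i < psum rT (Bv i) ≤ fval (i-1)
    omega
  · rintro ⟨j', hj1, hj2, hx1u, hxu, hx1v, hxv⟩
    -- u = fval (i-1), v = fval i
    have h1 : psum (transp b t) (Bv b t i) < psum (transp b t) j' := by omega
    have h2 : Bv b t i < j' := by
      by_contra hcon
      push_neg at hcon
      exact absurd (psum_mono (transp b t) hcon) (by omega)
    have h3 : psum (transp b t) (Bv b t i) ≤ psum (transp b t) (j' - 1) :=
      psum_mono _ (by omega)
    omega

lemma Bv_le_blk {r b : ℕ} {t : ℕ → ℕ} (H : Hyp r b t) (σ : Equiv.Perm (Fin (r + 1)))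
    (hP : Pprop r b t σ)
    (hD : ∀ i, inDelta r b t i → ((σ (finOf r i) : ℕ) < (σ (finOf r (i - 1)) : ℕ))) :
    ∀ q : Fin (r + 1), Bv b t q.val ≤ blk b t (σ q).val := by
  have main : ∀ d, ∀ q : Fin (r + 1), t (rowOf b t q.val) - 1 - colOf b t q.val = d →
      Bv b t q.val ≤ blk b t (σ q).val := by
    intro d
    induction d with
    | zero =>
      intro q hq0
      obtain ⟨a1, a2, a3, a4, a5, a6, a7, a8⟩ := cell H (show q.val ≤ r by omega)
      have h1 : 1 ≤ blk b t (σ q).val := one_le_idx (transp b t) (t 1) (σ q).val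
      have hBv : Bv b t q.val = t (rowOf b t q.val) - colOf b t q.val := rfl
      omega
    | succ d ih =>
      intro q hq0
      obtain ⟨a1, a2, a3, a4, a5, a6, a7, a8⟩ := cell H (show q.val ≤ r by omega)
      have hps : psum t (rowOf b t q.val) = psum t (rowOf b t q.val - 1) + t (rowOf b t q.val) := by
        have e := psum_succ t (rowOf b t q.val - 1)
        rw [show rowOf b t q.val - 1 + 1 = rowOf b t q.val from by omega] at e
        exact e
      have hcol2 : colOf b t q.val + 2 ≤ t (rowOf b t q.val) := by omega
      have hcolq : colOf b t q.val = q.val - psum t (rowOf b t q.val - 1) := rfl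
      have hq1lt : q.val + 1 < psum t (rowOf b t q.val) := by
        unfold colOf at hcol2
        omega
      obtain ⟨hr', hb', htpos', htmono', htsum'⟩ := H
      have hq1r : q.val + 1 ≤ r := by
        have := psum_mono t a2
        omega
      set q' : Fin (r + 1) := ⟨q.val + 1, by omega⟩ with hq'
      have hrow' : rowOf b t (q.val + 1) = rowOf b t q.val :=
        idx_eq a1 a2 (by omega) hq1lt
      have hcol' : colOf b t (q.val + 1) = colOf b t q.val + 1 := by
        unfold colOf
        rw [hrow']
        omega
      have hΔ : inDelta r b t (q.val + 1) := by
        refine ⟨by omega, hq1r, ?_⟩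
        intro j hj1 hjb heq
        have h1 : ¬ (j ≤ rowOf b t q.val - 1) := by
          intro hc
          have := psum_mono t hc
          omega
        have h2 : rowOf b t q.val ≤ j := by omega
        have := psum_mono t h2
        omega
      have hDq := hD (q.val + 1) hΔ
      have e1 : finOf r (q.val + 1 - 1) = q := by
        apply Fin.ext
        rw [finOf_val (by omega)]
        omega
      have e2 : finOf r (q.val + 1) = q' := by
        apply Fin.ext
        rw [finOf_val (by omega)]
      rw [e1, e2] at hDq
      have hblt : blk b t (σ q').val < blk b t (σ q).val := by
        have hmono : blk b t (σ q').val ≤ blk b t (σ q).val := blk_mono t (le_of_lt hDq)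
        rcases Nat.lt_or_ge (blk b t (σ q').val) (blk b t (σ q).val) with h' | h'
        · exact h'
        · exfalso
          have heq : blk b t (σ q).val = blk b t (σ q').val := by omega
          have := hP q q' (by rw [Fin.lt_def]; simp [hq']) heq
          omega
      have hih := ih q' (by rw [show (q' : ℕ) = q.val + 1 from rfl, hrow', hcol']; omega)
      have hBvq : Bv b t q.val = Bv b t (q'.val) + 1 := by
        unfold Bv
        rw [show (q' : ℕ) = q.val + 1 from rfl, hrow', hcol']
        omega
      omega
  intro q
  exact main _ q rfl

lemma blk_eq_Bv {r b : ℕ} {t : ℕ → ℕ} (H : Hyp r b t) (σ : Equiv.Perm (Fin (r + 1)))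
    (hP : Pprop r b t σ)
    (hD : ∀ i, inDelta r b t i → ((σ (finOf r i) : ℕ) < (σ (finOf r (i - 1)) : ℕ))) :
    ∀ q : Fin (r + 1), blk b t (σ q).val = Bv b t q.val := by
  have hle := Bv_le_blk H σ hP hD
  have hsum1 : ∑ q : Fin (r + 1), blk b t ((σ q).val) = ∑ q : Fin (r + 1), blk b t q.val :=
    Equiv.sum_comp σ (fun v => blk b t v.val)
  have hsum2 : ∑ q : Fin (r + 1), blk b t (((w0 r b t) q).val) = ∑ q : Fin (r + 1), blk b t q.val :=
    Equiv.sum_comp (w0 r b t) (fun v => blk b t v.val)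
  have hw0B : ∀ q : Fin (r + 1), blk b t (((w0 r b t) q).val) = Bv b t q.val := by
    intro q
    have := w0_apply H q
    rw [show blk b t (((w0 r b t) q).val) = blk b t (fval b t q.val) from by rw [this]]
    exact (fval_block H (by omega)).2.2.2
  have hsum3 : ∑ q : Fin (r + 1), Bv b t q.val = ∑ q : Fin (r + 1), blk b t ((σ q).val) := by
    rw [hsum1, ← hsum2]
    exact Finset.sum_congr rfl fun q _ => (hw0B q).symm
  have := (Finset.sum_eq_sum_iff_of_le (fun q _ => hle q)).1 hsum3
  intro q
  exact (this q (Finset.mem_univ q)).symm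

lemma val_formula {r b : ℕ} {t : ℕ → ℕ} (H : Hyp r b t) (σ : Equiv.Perm (Fin (r + 1)))
    (hP : Pprop r b t σ) (hB : ∀ q : Fin (r + 1), blk b t (σ q).val = Bv b t q.val)
    (q : Fin (r + 1)) :
    (σ q : ℕ) = psum (transp b t) (Bv b t q.val - 1) +
      (Finset.univ.filter fun p : Fin (r + 1) => Bv b t p.val = Bv b t q.val ∧ p < q).card := by
  obtain ⟨c1, c2, c3, c4⟩ := blk_bounds H (show (σ q).val ≤ r by omega)
  rw [hB q] at c1 c2 c3 c4
  have hcard : (Finset.univ.filter fun p : Fin (r + 1) =>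
      Bv b t p.val = Bv b t q.val ∧ p < q).card =
      (Finset.Ico (psum (transp b t) (Bv b t q.val - 1)) ((σ q : ℕ))).card := by
    apply Finset.card_bij (fun p _ => ((σ p : ℕ)))
    · intro p hp
      simp only [Finset.mem_filter, Finset.mem_univ, true_and] at hp
      obtain ⟨hBp, hplt⟩ := hp
      obtain ⟨d1, d2, d3, d4⟩ := blk_bounds H (show (σ p).val ≤ r by omega)
      rw [hB p, hBp] at d3
      have hval : (σ p : ℕ) < (σ q : ℕ) := hP p q hplt (by rw [hB p, hB q, hBp])
      rw [Finset.mem_Ico]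
      exact ⟨d3, hval⟩
    · intro p1 h1 p2 h2 he
      exact σ.injective (Fin.ext he)
    · intro v hv
      rw [Finset.mem_Ico] at hv
      have hvr : v ≤ r := by omega
      have hblkv : blk b t v = Bv b t q.val :=
        idx_eq c1 c2 hv.1 (by omega)
      refine ⟨σ.symm ⟨v, by omega⟩, ?_, ?_⟩
      · simp only [Finset.mem_filter, Finset.mem_univ, true_and]
        have hsymm : σ (σ.symm ⟨v, by omega⟩) = ⟨v, by omega⟩ := Equiv.apply_symm_apply _ _
        have hBp : Bv b t (σ.symm ⟨v, by omega⟩ : Fin (r + 1)).val = Bv b t q.val := by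
          rw [← hB (σ.symm ⟨v, by omega⟩), hsymm]
          exact hblkv
        refine ⟨hBp, ?_⟩
        have hne : σ.symm ⟨v, by omega⟩ ≠ q := by
          intro e
          have := congrArg σ e
          rw [hsymm] at this
          have := congrArg Fin.val this
          simp at this
          omega
        rcases lt_or_ge (σ.symm ⟨v, by omega⟩) q with h' | h'
        · exact h'
        · exfalso
          have hqlt : q < σ.symm ⟨v, by omega⟩ := lt_of_le_of_ne h' (Ne.symm hne)
          have hbeq : blk b t (σ q).val = blk b t (σ (σ.symm ⟨v, by omega⟩)).val := by
            rw [hsymm, hB q]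
            exact hblkv.symm
          have hlt2 := hP q (σ.symm ⟨v, by omega⟩) hqlt hbeq
          rw [hsymm] at hlt2
          simp at hlt2
          omega
      · rw [Equiv.apply_symm_apply]
  rw [hcard, Nat.card_Ico]
  omega

/-- uniqueness: any permutation with the two structural properties equals `w0`. -/
lemma eq_w0 {r b : ℕ} {t : ℕ → ℕ} (H : Hyp r b t) (σ : Equiv.Perm (Fin (r + 1)))
    (hP : Pprop r b t σ)
    (hD : ∀ i, inDelta r b t i → ((σ (finOf r i) : ℕ) < (σ (finOf r (i - 1)) : ℕ))) :
    σ = w0 r b t := by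
  have hB := blk_eq_Bv H σ hP hD
  have hw0B : ∀ q : Fin (r + 1), blk b t (((w0 r b t) q).val) = Bv b t q.val := by
    intro q
    rw [show blk b t (((w0 r b t) q).val) = blk b t (fval b t q.val) from by rw [w0_apply H q]]
    exact (fval_block H (by omega)).2.2.2
  apply Equiv.ext
  intro q
  apply Fin.ext
  rw [val_formula H σ hP hB q, val_formula H (w0 r b t) (Pprop_w0 H) hw0B q]

end S17

/-- Theorem 3.1(2): there is a unique minimal-length coset
representative `w_μ` of `W(P_{μ^⊤})\W(G)` sending every `α ∈ Δ_μ` to a negative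
root outside `Φ⁻_{μ^⊤}`; every other minimal representative sends some `α ∈ Δ_μ`
to a positive root. -/
theorem stmt17 (r b : ℕ) (hr : 1 ≤ r) (hb : 1 ≤ b) (t : ℕ → ℕ)
    (htpos : ∀ i, 1 ≤ i → i ≤ b → 1 ≤ t i)
    (htmono : ∀ i j, 1 ≤ i → i ≤ j → j ≤ b → t j ≤ t i)
    (htsum : psum t b = r + 1) :
    ∃ w₀ : Equiv.Perm (Fin (r + 1)),
      ((∀ u ∈ WP r (t 1) (transp b t), lenInv w₀ ≤ lenInv (u * w₀)) ∧
        ∀ i, inDelta r b t i →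
          negRoot r w₀ i ∧
            ¬ sameBlock b t (w₀ (finOf r (i - 1)) : ℕ) (w₀ (finOf r i) : ℕ)) ∧
      (∀ w : Equiv.Perm (Fin (r + 1)),
        ((∀ u ∈ WP r (t 1) (transp b t), lenInv w ≤ lenInv (u * w)) ∧
          ∀ i, inDelta r b t i →
            negRoot r w i ∧
              ¬ sameBlock b t (w (finOf r (i - 1)) : ℕ) (w (finOf r i) : ℕ)) →
        w = w₀) ∧
      (∀ w : Equiv.Perm (Fin (r + 1)),
        (∀ u ∈ WP r (t 1) (transp b t), lenInv w ≤ lenInv (u * w)) →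
        w ≠ w₀ → ∃ i, inDelta r b t i ∧ posRoot r w i) := by
  have H : S17.Hyp r b t := ⟨hr, hb, htpos, htmono, htsum⟩
  refine ⟨S17.w0 r b t, ⟨?_, ?_⟩, ?_, ?_⟩
  · intro u hu
    exact S17.partA H (S17.Pprop_w0 H) hu
  · intro i hΔ
    have hB := S17.partB H hΔ
    obtain ⟨hi1, hir, hnb⟩ := hΔ
    have e1 : ((S17.w0 r b t) (finOf r (i - 1)) : ℕ) = S17.fval b t (i - 1) := by
      rw [S17.w0_apply H, S17.finOf_val (by omega)]
    have e2 : ((S17.w0 r b t) (finOf r i) : ℕ) = S17.fval b t i := by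
      rw [S17.w0_apply H, S17.finOf_val (by omega)]
    constructor
    · show ((S17.w0 r b t) (finOf r i) : ℕ) < (S17.w0 r b t) (finOf r (i - 1))
      rw [e1, e2]
      exact hB.1
    · rw [e1, e2]
      exact hB.2
  · rintro w ⟨hmin, hneg⟩
    exact S17.eq_w0 H w (S17.min_rep_P H w hmin) (fun i hi => (hneg i hi).1)
  · intro w hmin hne
    by_contra hno
    push_neg at hno
    have hD : ∀ i, inDelta r b t i → ((w (finOf r i) : ℕ) < (w (finOf r (i - 1)) : ℕ)) := by
      intro i hi
      have hnp : ¬ posRoot r w i := hno i hi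
      unfold posRoot at hnp
      obtain ⟨hi1, hir, -⟩ := hi
      have hv1 : ((finOf r (i - 1)) : ℕ) = i - 1 := S17.finOf_val (by omega)
      have hv2 : ((finOf r i) : ℕ) = i := S17.finOf_val hir
      have hne3 : (w (finOf r (i - 1))) ≠ (w (finOf r i)) := by
        intro e
        have e2 := congrArg Fin.val (w.injective e)
        rw [hv1, hv2] at e2
        omega
      have hne4 : ((w (finOf r (i - 1))) : ℕ) ≠ ((w (finOf r i)) : ℕ) :=
        fun e => hne3 (Fin.ext e)
      omega
    exact hne (S17.eq_w0 H w (S17.min_rep_P H w hmin) hD)
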